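/- Let f be an integrable function on ℝ^d and x₀ ∈ ℝ^d, and let τ_{x₀}f(x) := f(x − x₀) denote the translate of f. Then ∫_{ℝ^d} Ψ(x, M_φ(f)(x)) dx < ∞ if, and only if, ∫_{ℝ^d} Ψ(x, M_φ(τ_{x₀}f)(x)) dx < ∞; that is, f ∈ H^log(ℝ^d) if and only if τ_{x₀}f ∈ H^log(ℝ^d). -/
import Mathlib


open MeasureTheory Metric Real ENNReal NNReal

/-- `Ψ(x,t) = t / (log(e+t) + log(e+|x|))`. -/
noncomputable def PsiFun {d : ℕ} (x : EuclideanSpace ℝ (Fin d)) (t : ℝ) : ℝ :=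
  t / (Real.log (Real.exp 1 + t) + Real.log (Real.exp 1 + ‖x‖))

/-- The dilate `φ_ε(x) = ε^{-d} φ(x/ε)` convolved with `f`, evaluated at `x`. -/
noncomputable def convPhi {d : ℕ} (φ : EuclideanSpace ℝ (Fin d) → ℝ)
    (f : EuclideanSpace ℝ (Fin d) → ℂ) (ε : ℝ) (x : EuclideanSpace ℝ (Fin d)) : ℂ :=
  ∫ y, ((ε ^ d)⁻¹ * φ (ε⁻¹ • (x - y))) • f y

/-- The smooth maximal function `M_φ(f)(x) = sup_{ε>0} |(f * φ_ε)(x)|`. -/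
noncomputable def MPhi {d : ℕ} (φ : EuclideanSpace ℝ (Fin d) → ℝ)
    (f : EuclideanSpace ℝ (Fin d) → ℂ) (x : EuclideanSpace ℝ (Fin d)) : ℝ≥0∞ :=
  ⨆ (ε : ℝ) (_ : 0 < ε), (‖convPhi φ f ε x‖₊ : ℝ≥0∞)

lemma convPhi_translate {d : ℕ} (φ : EuclideanSpace ℝ (Fin d) → ℝ)
    (f : EuclideanSpace ℝ (Fin d) → ℂ) (x₀ : EuclideanSpace ℝ (Fin d)) (ε : ℝ)
    (x : EuclideanSpace ℝ (Fin d)) :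
    convPhi φ (fun y => f (y - x₀)) ε x = convPhi φ f ε (x - x₀) := by
  unfold convPhi
  rw [← integral_sub_right_eq_self
      (fun y => ((ε ^ d)⁻¹ * φ (ε⁻¹ • (x - x₀ - y))) • f y) x₀]
  simp only [sub_sub_sub_cancel_right]

lemma MPhi_translate {d : ℕ} (φ : EuclideanSpace ℝ (Fin d) → ℝ)
    (f : EuclideanSpace ℝ (Fin d) → ℂ) (x₀ : EuclideanSpace ℝ (Fin d))
    (x : EuclideanSpace ℝ (Fin d)) :
    MPhi φ (fun y => f (y - x₀)) x = MPhi φ f (x - x₀) := by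
  unfold MPhi
  simp only [convPhi_translate]

lemma one_le_exp_one : (1 : ℝ) ≤ Real.exp 1 := by
  have := Real.add_one_le_exp 1
  linarith

lemma psi_translate_le {d : ℕ} (x x₀ : EuclideanSpace ℝ (Fin d)) (t : ℝ) (ht : 0 ≤ t) :
    PsiFun x t ≤ (1 + Real.log (Real.exp 1 + ‖x₀‖)) * PsiFun (x - x₀) t := by
  have he := one_le_exp_one
  have hA : (1 : ℝ) ≤ Real.log (Real.exp 1 + t) := by
    calc (1 : ℝ) = Real.log (Real.exp 1) := (Real.log_exp 1).symm
    _ ≤ _ := Real.log_le_log (Real.exp_pos 1) (by linarith)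
  have hB : (1 : ℝ) ≤ Real.log (Real.exp 1 + ‖x‖) := by
    calc (1 : ℝ) = Real.log (Real.exp 1) := (Real.log_exp 1).symm
    _ ≤ _ := Real.log_le_log (Real.exp_pos 1) (le_add_of_nonneg_right (norm_nonneg x))
  have hL : (0 : ℝ) ≤ Real.log (Real.exp 1 + ‖x₀‖) := by
    have : (1 : ℝ) ≤ Real.log (Real.exp 1 + ‖x₀‖) := by
      calc (1 : ℝ) = Real.log (Real.exp 1) := (Real.log_exp 1).symm
      _ ≤ _ := Real.log_le_log (Real.exp_pos 1) (le_add_of_nonneg_right (norm_nonneg x₀))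
    linarith
  have hB' : (1 : ℝ) ≤ Real.log (Real.exp 1 + ‖x - x₀‖) := by
    calc (1 : ℝ) = Real.log (Real.exp 1) := (Real.log_exp 1).symm
    _ ≤ _ := Real.log_le_log (Real.exp_pos 1) (le_add_of_nonneg_right (norm_nonneg _))
  have hlog : Real.log (Real.exp 1 + ‖x - x₀‖) ≤
      Real.log (Real.exp 1 + ‖x‖) + Real.log (Real.exp 1 + ‖x₀‖) := by
    rw [← Real.log_mul (by positivity) (by positivity)]
    apply Real.log_le_log (by positivity)
    have h1 : ‖x - x₀‖ ≤ ‖x‖ + ‖x₀‖ := norm_sub_le _ _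
    nlinarith [norm_nonneg x, norm_nonneg x₀]
  unfold PsiFun
  set A := Real.log (Real.exp 1 + t)
  set B := Real.log (Real.exp 1 + ‖x‖)
  set B' := Real.log (Real.exp 1 + ‖x - x₀‖)
  set L := Real.log (Real.exp 1 + ‖x₀‖)
  rw [← mul_div_assoc, div_le_div_iff₀ (by linarith) (by linarith)]
  nlinarith [mul_le_mul_of_nonneg_left hlog ht,
    mul_nonneg (mul_nonneg ht hL) (by linarith : (0:ℝ) ≤ A + B - 1)]

/-- Finiteness of the `H^log` integral transfers to translates (one direction,
for an arbitrary `ℝ≥0∞`-valued function `g`). -/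
lemma hlog_key {d : ℕ} (g : EuclideanSpace ℝ (Fin d) → ℝ≥0∞)
    (x₀ : EuclideanSpace ℝ (Fin d))
    (h : ∫⁻ x, ENNReal.ofReal (PsiFun x ((g x).toReal)) < ∞) :
    ∫⁻ x, ENNReal.ofReal (PsiFun x ((g (x - x₀)).toReal)) < ∞ := by
  set C : ℝ := 1 + Real.log (Real.exp 1 + ‖x₀‖) with hC
  have hC0 : 0 ≤ C := by
    have : (1 : ℝ) ≤ Real.log (Real.exp 1 + ‖x₀‖) := by
      calc (1 : ℝ) = Real.log (Real.exp 1) := (Real.log_exp 1).symm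
      _ ≤ _ := Real.log_le_log (Real.exp_pos 1) (le_add_of_nonneg_right (norm_nonneg x₀))
    simp only [hC]; linarith
  have step1 : ∫⁻ x, ENNReal.ofReal (PsiFun x ((g (x - x₀)).toReal)) ≤
      ∫⁻ x, ENNReal.ofReal C * ENNReal.ofReal (PsiFun (x - x₀) ((g (x - x₀)).toReal)) := by
    apply lintegral_mono
    intro x
    dsimp only
    rw [← ENNReal.ofReal_mul hC0]
    exact ENNReal.ofReal_le_ofReal (psi_translate_le x x₀ _ ENNReal.toReal_nonneg)
  have step2 : ∫⁻ x, ENNReal.ofReal C *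
      ENNReal.ofReal (PsiFun (x - x₀) ((g (x - x₀)).toReal)) =
      ENNReal.ofReal C * ∫⁻ x, ENNReal.ofReal (PsiFun (x - x₀) ((g (x - x₀)).toReal)) :=
    lintegral_const_mul' _ _ ENNReal.ofReal_ne_top
  have step3 : ∫⁻ x, ENNReal.ofReal (PsiFun (x - x₀) ((g (x - x₀)).toReal)) =
      ∫⁻ x, ENNReal.ofReal (PsiFun x ((g x).toReal)) :=
    lintegral_sub_right_eq_self (fun x => ENNReal.ofReal (PsiFun x ((g x).toReal))) x₀
  calc ∫⁻ x, ENNReal.ofReal (PsiFun x ((g (x - x₀)).toReal)) ≤ _ := step1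
  _ = ENNReal.ofReal C * ∫⁻ x, ENNReal.ofReal (PsiFun x ((g x).toReal)) := by
      rw [step2, step3]
  _ < ∞ := ENNReal.mul_lt_top ENNReal.ofReal_lt_top h

/-- **Translation invariance of `H^log(ℝ^d)`.** `f ∈ H^log` iff its translate `τ_{x₀} f ∈ H^log`. -/
theorem Hlog_translation_invariant {d : ℕ} (φ : EuclideanSpace ℝ (Fin d) → ℝ)
    (hφ_nonneg : ∀ x, 0 ≤ φ x) (hφ_smooth : ContDiff ℝ (⊤ : ℕ∞) φ)
    (hφ_supp : Function.support φ ⊆ Metric.closedBall 0 1)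
    (hφ_int : ∫ x, φ x = 1)
    (hφ_const : ∃ c : ℝ, ∀ x : EuclideanSpace ℝ (Fin d), ‖x‖ ≤ 1 / 2 → φ x = c)
    (f : EuclideanSpace ℝ (Fin d) → ℂ) (hint : Integrable f)
    (x₀ : EuclideanSpace ℝ (Fin d)) :
    (∫⁻ x, ENNReal.ofReal (PsiFun x ((MPhi φ f x).toReal)) < ∞) ↔
      (∫⁻ x, ENNReal.ofReal (PsiFun x ((MPhi φ (fun y => f (y - x₀)) x).toReal)) < ∞) := by
  constructor
  · intro h
    have := hlog_key (MPhi φ f) x₀ h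
    simpa only [← MPhi_translate φ f x₀] using this
  · intro h
    have := hlog_key (MPhi φ (fun y => f (y - x₀))) (-x₀) h
    have heq : ∀ x : EuclideanSpace ℝ (Fin d),
        MPhi φ (fun y => f (y - x₀)) (x - -x₀) = MPhi φ f x := by
      intro x
      rw [MPhi_translate]
      congr 1
      abel
    simpa only [heq] using this
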